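/- arXiv:1805.02906 — 3 statements merged into one kernel-verified Lean document; each statement's English description precedes it below -/
import Mathlib

section
/- For -1 < λ < 0 and l = 2^{1/(1+λ)}, the inequality 2 log^λ(e+t) ≤ l log^λ(e+lt) holds for all t ≥ 0. -/
/-!
Since `l ≥ 1`, the map `x ↦ x ^ l` grows at least like `l * x` from `x = e` on, so
`e + l t ≤ (e + t) ^ l` and hence `log (e + l t) ≤ l log (e + t)`. As `λ < 0`, `x ↦ x ^ λ` is
antitone, so `l * log (e + l t) ^ λ ≥ l * (l * log (e + t)) ^ λ = l ^ (1 + λ) * log (e + t) ^ λ`,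
and `l ^ (1 + λ) = 2` by the choice of `l`.
-/

open Real

namespace Real

lemma mul_le_rpow_of_exp_one_le {x l : ℝ} (hl : 1 ≤ l) (hx : exp 1 ≤ x) : l * x ≤ x ^ l := by
  have hx₀ : 0 < x := (exp_pos 1).trans_le hx
  have hl_le : l ≤ x ^ (l - 1) :=
    calc l ≤ exp (l - 1) := by linarith [add_one_le_exp (l - 1)]
      _ = exp 1 ^ (l - 1) := (exp_one_rpow _).symm
      _ ≤ x ^ (l - 1) := rpow_le_rpow (exp_pos 1).le hx (by linarith)
  calc l * x ≤ x ^ (l - 1) * x := by gcongr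
    _ = x ^ l := by rw [← rpow_add_one hx₀.ne', sub_add_cancel]

lemma log_exp_one_add_mul_le {l t : ℝ} (hl : 1 ≤ l) (ht : 0 ≤ t) :
    log (exp 1 + l * t) ≤ l * log (exp 1 + t) := by
  have hx : exp 1 ≤ exp 1 + t := le_add_of_nonneg_right ht
  have hx₀ : 0 < exp 1 + t := (exp_pos 1).trans_le hx
  have hlx : exp 1 + l * t ≤ l * (exp 1 + t) := by nlinarith [exp_pos 1]
  calc log (exp 1 + l * t) ≤ log ((exp 1 + t) ^ l) :=
        log_le_log (by positivity) (hlx.trans (mul_le_rpow_of_exp_one_le hl hx))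
    _ = l * log (exp 1 + t) := log_rpow hx₀ l

lemma one_le_log_exp_one_add {t : ℝ} (ht : 0 ≤ t) : 1 ≤ log (exp 1 + t) := by
  rw [le_log_iff_exp_le (by positivity)]
  exact le_add_of_nonneg_right ht

lemma rpow_one_div_one_add_mul_rpow {a μ : ℝ} (ha : 0 ≤ a) (hμ : 1 + μ ≠ 0) :
    a ^ (1 / (1 + μ)) * (a ^ (1 / (1 + μ))) ^ μ = a := by
  rw [← rpow_one_add' (by positivity) (by simpa using hμ), ← rpow_mul ha,
    one_div_mul_cancel hμ, rpow_one]

end Real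

/-- For `-1 < λ < 0` and `l = 2^{1/(1+λ)}`, one has `2 log^λ(e+t) ≤ l log^λ(e+lt)`
for all `t ≥ 0`. -/
theorem stmt_4 (lam : ℝ) (hlam₁ : -1 < lam) (hlam₂ : lam < 0)
    (l : ℝ) (hl : l = (2:ℝ) ^ (1 / (1 + lam))) :
    ∀ t ≥ (0:ℝ),
      2 * Real.log (Real.exp 1 + t) ^ lam ≤ l * Real.log (Real.exp 1 + l * t) ^ lam := by
  intro t ht
  have hl₁ : 1 ≤ l := hl ▸ one_le_rpow one_le_two (one_div_nonneg.mpr (by linarith))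
  have hA : 1 ≤ log (exp 1 + t) := one_le_log_exp_one_add ht
  have hl_mul : l * l ^ lam = 2 := hl ▸ rpow_one_div_one_add_mul_rpow zero_le_two (by linarith)
  calc 2 * log (exp 1 + t) ^ lam = l * (l * log (exp 1 + t)) ^ lam := by
        rw [mul_rpow (by linarith) (by linarith), ← mul_assoc, hl_mul]
    _ ≤ l * log (exp 1 + l * t) ^ lam := by
        gcongr ?_ * ?_
        exact rpow_le_rpow_of_nonpos
          (one_pos.trans_le (one_le_log_exp_one_add (by positivity)))
          (log_exp_one_add_mul_le hl₁ ht) hlam₂.le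
end

section
/- Let λ > 0 and let (a_{j,k})_{j≥1, 1≤k≤2^j} be nonnegative reals with a_{j,k} ≤ 2π for all j,k. If ∑_{j=1}^∞ ∑_{k=1}^{2^j} a_{j,k}² log^λ(e + 2^j a_{j,k}) < ∞, then ∑_{j=1}^∞ j^λ ∑_{k=1}^{2^j} a_{j,k}² < ∞. -/
/-!
Split each `a_{j,k}` according to whether it exceeds `(2/3)^j`. Large terms satisfy
`2^j a_{j,k} ≥ (4/3)^j`, so `log(e + 2^j a_{j,k}) ≥ j log(4/3)` and `j^λ a_{j,k}²` is controlled
by the convergent series. Small terms contribute at most `2^j · j^λ (2/3)^{2j} = j^λ (8/9)^j`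
on level `j`, which is summable. Any threshold `t^j` with `1/2 < t < 1/√2` would do.
-/

open Real Finset

lemma summable_rpow_mul_geometric {p r : ℝ} (hr₀ : 0 ≤ r) (hr₁ : r < 1) :
    Summable fun n : ℕ => (n : ℝ) ^ p * r ^ n := by
  have hpow := summable_pow_mul_geometric_of_norm_lt_one (R := ℝ) ⌈p⌉₊
    (by rwa [norm_of_nonneg hr₀])
  refine (summable_nat_add_iff 1).1 (((summable_nat_add_iff 1).2 hpow).of_nonneg_of_le
    (fun n => by positivity) fun n => ?_)
  refine mul_le_mul_of_nonneg_right ?_ (pow_nonneg hr₀ _)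
  rw [← rpow_natCast]
  exact rpow_le_rpow_of_exponent_le (by simp) (Nat.le_ceil p)

lemma natCast_rpow_le_of_pow_le {b x lam : ℝ} {n : ℕ} (hb : 1 < b) (hlam : 0 ≤ lam)
    (hx : b ^ n ≤ x) : (n : ℝ) ^ lam ≤ (log b)⁻¹ ^ lam * log x ^ lam := by
  have hlogb : 0 < log b := log_pos hb
  have hn : (n : ℝ) * log b ≤ log x := by
    rw [← log_pow]
    exact log_le_log (by positivity) hx
  rw [← mul_rpow (by positivity) (by nlinarith [n.cast_nonneg (α := ℝ)])]
  gcongr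
  rwa [le_inv_mul_iff₀ hlogb, mul_comm]

lemma natCast_rpow_mul_sq_le {lam t a : ℝ} (hlam : 0 ≤ lam) (ht : 1 < 2 * t) (ha : 0 ≤ a)
    (n : ℕ) :
    (n : ℝ) ^ lam * a ^ 2 ≤
      (log (2 * t))⁻¹ ^ lam * (a ^ 2 * log (exp 1 + 2 ^ n * a) ^ lam)
        + (n : ℝ) ^ lam * (t ^ 2) ^ n := by
  rcases le_or_gt a (t ^ n) with hsmall | hlarge
  · have hsq : a ^ 2 ≤ (t ^ 2) ^ n := by
      rw [← pow_mul, mul_comm, pow_mul]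
      exact pow_le_pow_left₀ ha hsmall 2
    have hlog : 0 ≤ log (exp 1 + 2 ^ n * a) :=
      log_nonneg (by nlinarith [add_one_le_exp 1, pow_pos (two_pos : (0 : ℝ) < 2) n])
    have hmain : 0 ≤ (log (2 * t))⁻¹ ^ lam * (a ^ 2 * log (exp 1 + 2 ^ n * a) ^ lam) :=
      mul_nonneg (rpow_nonneg (inv_nonneg.2 (log_nonneg ht.le)) _)
        (mul_nonneg (sq_nonneg a) (rpow_nonneg hlog _))
    nlinarith [mul_le_mul_of_nonneg_left hsq (by positivity : (0 : ℝ) ≤ (n : ℝ) ^ lam)]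
  · have hpow : (2 * t) ^ n ≤ exp 1 + 2 ^ n * a := by
      rw [mul_pow]
      nlinarith [exp_pos 1, pow_pos (two_pos : (0 : ℝ) < 2) n]
    have hlarge' :=
      mul_le_mul_of_nonneg_right (natCast_rpow_le_of_pow_le ht hlam hpow) (sq_nonneg a)
    nlinarith [mul_nonneg (by positivity : (0 : ℝ) ≤ (n : ℝ) ^ lam) (pow_nonneg (sq_nonneg t) n)]

lemma natCast_rpow_mul_sum_sq_le {ι : Type*} {lam t : ℝ} (hlam : 0 ≤ lam) (ht : 1 < 2 * t)
    {n : ℕ} {s : Finset ι} (hs : #s ≤ 2 ^ n) {a : ι → ℝ} (ha : ∀ k, 0 ≤ a k) :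
    (n : ℝ) ^ lam * ∑ k ∈ s, a k ^ 2 ≤
      (log (2 * t))⁻¹ ^ lam * ∑ k ∈ s, a k ^ 2 * log (exp 1 + 2 ^ n * a k) ^ lam
        + (n : ℝ) ^ lam * (2 * t ^ 2) ^ n := by
  calc (n : ℝ) ^ lam * ∑ k ∈ s, a k ^ 2
      ≤ ∑ k ∈ s, ((log (2 * t))⁻¹ ^ lam * (a k ^ 2 * log (exp 1 + 2 ^ n * a k) ^ lam)
          + (n : ℝ) ^ lam * (t ^ 2) ^ n) := by
        rw [mul_sum]
        exact sum_le_sum fun k _ => natCast_rpow_mul_sq_le hlam ht (ha k) n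
    _ ≤ (log (2 * t))⁻¹ ^ lam * ∑ k ∈ s, a k ^ 2 * log (exp 1 + 2 ^ n * a k) ^ lam
          + 2 ^ n * ((n : ℝ) ^ lam * (t ^ 2) ^ n) := by
        rw [sum_add_distrib, ← mul_sum, sum_const, nsmul_eq_mul]
        gcongr
        exact_mod_cast hs
    _ = _ := by rw [mul_pow]; ring

theorem stmt_7_general (lam : ℝ) (hlam : 0 < lam) (a : ℕ → ℕ → ℝ)
    (ha : ∀ j k, 0 ≤ a j k)
    (h : Summable fun j : ℕ =>
      ∑ k ∈ Finset.Icc 1 (2 ^ (j + 1)),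
        a (j + 1) k ^ 2 * Real.log (Real.exp 1 + 2 ^ (j + 1) * a (j + 1) k) ^ lam) :
    Summable fun j : ℕ =>
      ((j:ℝ) + 1) ^ lam * ∑ k ∈ Finset.Icc 1 (2 ^ (j + 1)), a (j + 1) k ^ 2 := by
  have ht : 1 < 2 * (2 / 3 : ℝ) := by norm_num
  have hsmall : Summable fun j : ℕ => ((j : ℝ) + 1) ^ lam * (2 * (2 / 3 : ℝ) ^ 2) ^ (j + 1) := by
    have := (summable_nat_add_iff 1).2
      (summable_rpow_mul_geometric (p := lam) (r := 2 * (2 / 3) ^ 2) (by norm_num) (by norm_num))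
    simpa only [Nat.cast_add, Nat.cast_one] using this
  refine ((h.mul_left ((log (2 * (2 / 3)))⁻¹ ^ lam)).add hsmall).of_nonneg_of_le
    (fun j => mul_nonneg (by positivity) (sum_nonneg fun k _ => sq_nonneg _)) fun j => ?_
  have hcard : #(Icc 1 (2 ^ (j + 1))) ≤ 2 ^ (j + 1) := by simp
  simpa only [Nat.cast_add, Nat.cast_one] using
    natCast_rpow_mul_sum_sq_le hlam.le ht hcard (ha (j + 1))

/-- Let `λ > 0` and let `a_{j,k}`, `j ≥ 1`, `1 ≤ k ≤ 2^j`, be nonnegative reals bounded by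
`2π`. If `∑_j ∑_k a_{j,k}² log^λ(e + 2^j a_{j,k}) < ∞`, then `∑_j j^λ ∑_k a_{j,k}² < ∞`. -/
theorem stmt_7 (lam : ℝ) (hlam : 0 < lam) (a : ℕ → ℕ → ℝ)
    (ha : ∀ j k, 0 ≤ a j k) (hb : ∀ j k, a j k ≤ 2 * π)
    (h : Summable fun j : ℕ =>
      ∑ k ∈ Finset.Icc 1 (2 ^ (j + 1)),
        a (j + 1) k ^ 2 * Real.log (Real.exp 1 + 2 ^ (j + 1) * a (j + 1) k) ^ lam) :
    Summable fun j : ℕ =>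
      ((j:ℝ) + 1) ^ lam * ∑ k ∈ Finset.Icc 1 (2 ^ (j + 1)), a (j + 1) k ^ 2 :=
  stmt_7_general lam hlam a ha h
end

section
/- Fix the standard dyadic decomposition {Γ_{j,k}} of the unit circle. For any n-level dyadic arc Γ_{n,m} and any j ≥ n, the number of j-level dyadic arcs Γ_{j,l} whose associated annular decomposition 𝒫(Γ_{j,l}) contains Γ_{n,m} is at most 3·2^{j−n}. -/
/-!
We model the annular decomposition `𝒫(Γ_{j,l})` of the unit circle around a dyadic arc
`Γ_{j,l}` combinatorially, via the dyadic intervals `I_{n,m} = [2π(m-1)/2ⁿ, 2πm/2ⁿ]` of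
`[0,2π]`.  A level-`n` arc is identified with its (1-based) index `m ∈ {1,…,2ⁿ}`, i.e. with
the interval `[m-1, m]` in level-`n` units (taken mod `2ⁿ` on the circle).

Starting from `Γ_{j,l}` and its brother (together forming their level-`(j-1)` parent), the
construction successively adjoins, at levels `n = j-1, j-2, …`, the adjacent dyadic arc on
each side of the covered region together with its brother whenever that brother lies further
out (i.e. shares a parent with it), stopping as soon as the arcs adjoined on the two sides
meet.  The covered region is an arc; we track its endpoints `(L, R)` in level-`n` units
(as integers, unwrapped; indices of chosen arcs are read off modulo `2ⁿ`).
-/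

/-- One step of the construction at a given level, in that level's units: on the
anticlockwise side adjoin the arc `[R, R+1]`, together with `[R+1, R+2]` if it shares a
parent with it (i.e. if `R` is even); on the clockwise side adjoin `[L-1, L]`, together
with `[L-2, L-1]` if it shares a parent with it (i.e. if `L` is even). -/
def stepLR (p : ℤ × ℤ) : ℤ × ℤ :=
  (if p.1 % 2 = 0 then p.1 - 2 else p.1 - 1, if p.2 % 2 = 0 then p.2 + 2 else p.2 + 1)

/-- `stateLR l i` is the pair of endpoints of the covered region around the `j`-level arc of
index `l`, expressed in level-`(j-1-i)` units, before the arcs of level `j-1-i` are adjoined.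
Initially (`i = 0`) the covered region is the level-`(j-1)` parent of `Γ_{j,l}` and its
brother, namely `[p, p+1]` with 0-based parent index `p = (l-1)/2`. Passing to the next
level divides the (even) endpoints by two. -/
def stateLR (l : ℕ) : ℕ → ℤ × ℤ
  | 0 => (((l:ℤ) - 1) / 2, ((l:ℤ) - 1) / 2 + 1)
  | i + 1 => ((stepLR (stateLR l i)).1 / 2, (stepLR (stateLR l i)).2 / 2)

/-- `inducesArc j l n m` : the level-`n` arc `Γ_{n,m}` belongs to the decomposition
`𝒫(Γ_{j,l})`.  For `n = j` these are `Γ_{j,l}` and its brother.  For `1 ≤ n < j` the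
construction must not have stopped at any earlier level (the region adjoined at a level has
total length `R' - L'`, and the two sides meet exactly when this reaches the circumference
`2ⁿ` in level-`n` units), and `m` must be (mod `2ⁿ`) one of the indices of the arcs adjoined
at level `n`: `R`, `R+1` (the latter if `R` is even), `L-1`, and `L-2` (the latter if `L` is
even), where `(L, R) = stateLR l (j-1-n)`. -/
def inducesArc (j l n m : ℕ) : Prop :=
  (n = j ∧ (m = l ∨ (l % 2 = 1 ∧ m = l + 1) ∨ (l % 2 = 0 ∧ m = l - 1))) ∨
  (1 ≤ n ∧ n < j ∧
    (∀ i < j - 1 - n,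
      (stepLR (stateLR l i)).2 - (stepLR (stateLR l i)).1 < 2 ^ (j - 1 - i)) ∧
    (let L := (stateLR l (j - 1 - n)).1
     let R := (stateLR l (j - 1 - n)).2
     ((m:ℤ) - 1) % 2 ^ n = R % 2 ^ n ∨
     (R % 2 = 0 ∧ ((m:ℤ) - 1) % 2 ^ n = (R + 1) % 2 ^ n) ∨
     ((m:ℤ) - 1) % 2 ^ n = (L - 1) % 2 ^ n ∨
     (L % 2 = 0 ∧ ((m:ℤ) - 1) % 2 ^ n = (L - 2) % 2 ^ n)))

/-!
Write `l - 1 = 2^(j-n) q + r` with `0 ≤ r < 2^(j-n)`. The region covered around `Γ_{j,l}`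
when level `n` is reached is `[L, R]` with `L = q - 1` (or `q` when `r ≥ 2^(j-n) - 2`) and
`R = q + 1` (or `q + 2` when `r ≥ 2`), so its offsets from `q` depend on `r` only. For fixed `r`,
`Γ_{n,m}` must then sit at one of three offsets from `q` (the neighbours `R` and `L - 1`, and one
possible brother), which pins down `q` modulo `2ⁿ` to three values. Summing over the `2^(j-n)`
residues `r` gives `3 · 2^(j-n)`.
-/

theorem stateLR_eq {l : ℕ} (i : ℕ) {q r : ℤ} (hl : (l : ℤ) - 1 = 2 ^ (i + 1) * q + r)
    (hr₀ : 0 ≤ r) (hr : r < 2 ^ (i + 1)) :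
    stateLR l i = (q - if r + 2 < 2 ^ (i + 1) then 1 else 0, q + if r < 2 then 1 else 2) := by
  induction i generalizing q r with
  | zero =>
    simp only [zero_add, pow_one] at hl hr ⊢
    simp only [stateLR, Prod.mk.injEq]
    split_ifs <;> omega
  | succ i ih =>
    set P : ℤ := 2 ^ (i + 1)
    have hP2 : 2 ≤ P := le_self_pow₀ (by norm_num) (by omega)
    rw [pow_succ' 2 (i + 1)] at hl hr ⊢
    rw [stateLR]
    rcases lt_or_ge r P with h | h
    · rw [ih (q := 2 * q) (by rw [hl]; ring) hr₀ h]
      simp only [stepLR, Prod.mk.injEq]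
      split_ifs <;> omega
    · rw [ih (q := 2 * q + 1) (r := r - P) (by rw [hl]; ring) (by omega) (by omega)]
      simp only [stepLR, Prod.mk.injEq]
      split_ifs <;> omega

/-- The brother `R + 1` (for `R` even) is odd and the brother `L - 2` (for `L` even) is even,
so the parity of `k` decides which of the two can be hit. -/
theorem modEq_of_adjoined {N k L R : ℤ} (hN : 2 ∣ N)
    (h : k ≡ R [ZMOD N] ∨ (R % 2 = 0 ∧ k ≡ R + 1 [ZMOD N]) ∨ k ≡ L - 1 [ZMOD N] ∨
      (L % 2 = 0 ∧ k ≡ L - 2 [ZMOD N])) :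
    k ≡ R [ZMOD N] ∨ k ≡ L - 1 [ZMOD N] ∨
      k ≡ (if k % 2 = 1 then R + 1 else L - 2) [ZMOD N] := by
  rcases h with h | ⟨hR, h⟩ | h | ⟨hL, h⟩
  · exact .inl h
  · have hk : k % 2 = 1 := by have := h.of_dvd hN; unfold Int.ModEq at this; omega
    exact .inr <| .inr <| by rwa [if_pos hk]
  · exact .inr <| .inl h
  · have hk : k % 2 = 0 := by have := h.of_dvd hN; unfold Int.ModEq at this; omega
    exact .inr <| .inr <| by rwa [if_neg (by omega)]

/-- With `l - 1 = B q + r`, the level-`n` region around `Γ_{j,l}` is `[q - b, q + a]`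
(`stateLR_eq`); these are the offsets from `q` of the arcs that can contain `Γ_{n,m}`, `k = m - 1`. -/
def adjoinedOffsets (B r k : ℤ) : Finset ℤ :=
  let a := if r < 2 then 1 else 2
  let b := if r + 2 < B then 1 else 0
  {a, -b - 1, if k % 2 = 1 then a + 1 else -b - 2}

theorem inducesArc.lt_of_ne {j l n m : ℕ} (h : inducesArc j l n m) (hnj : n ≠ j) : n < j := by
  rcases h with ⟨h, -⟩ | ⟨-, h, -⟩ <;> omega

theorem inducesArc.exists_offset {j l n m : ℕ} {q r : ℤ} (h : inducesArc j l n m) (hnj : n ≠ j)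
    (hl : (l : ℤ) - 1 = 2 ^ (j - n) * q + r) (hr₀ : 0 ≤ r) (hr : r < 2 ^ (j - n)) :
    ∃ c ∈ adjoinedOffsets (2 ^ (j - n)) r ((m : ℤ) - 1), (m : ℤ) - 1 ≡ q + c [ZMOD 2 ^ n] := by
  rcases h with ⟨h, -⟩ | ⟨hn, hlt, -, hadj⟩
  · exact absurd h hnj
  have hi : j - 1 - n + 1 = j - n := by omega
  rw [← hi] at hl hr
  rw [stateLR_eq _ hl hr₀ hr, hi] at hadj
  dsimp only at hadj
  simp only [adjoinedOffsets, Finset.mem_insert, Finset.mem_singleton, exists_eq_or_imp,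
    exists_eq_left]
  rcases modEq_of_adjoined (dvd_pow_self 2 (by omega)) hadj with h | h | h
  · exact .inl h
  · exact .inr <| .inl <| by convert h using 1; ring
  · refine .inr <| .inr ?_
    split_ifs at h ⊢ <;> convert h using 1 <;> ring

open scoped Classical in
theorem card_filter_inducesArc_le_of_ne {n m j : ℕ} (hnj : n ≠ j) :
    ((Finset.Icc 1 (2 ^ j)).filter (inducesArc j · n m)).card ≤ 3 * 2 ^ (j - n) := by
  have hB : 0 < 2 ^ (j - n) := by positivity
  let candidates (r : ℕ) : Finset ℕ :=
    (adjoinedOffsets (2 ^ (j - n)) r ((m : ℤ) - 1)).image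
      fun c => 2 ^ (j - n) * (((m : ℤ) - 1 - c) % 2 ^ n).toNat + r + 1
  have hsub : (Finset.Icc 1 (2 ^ j)).filter (inducesArc j · n m) ⊆
      (Finset.range (2 ^ (j - n))).biUnion candidates := by
    intro l hl
    obtain ⟨⟨hl₁, hl₂⟩, h⟩ := by simpa only [Finset.mem_filter, Finset.mem_Icc] using hl
    have hqr := Nat.div_add_mod (l - 1) (2 ^ (j - n))
    set q := (l - 1) / 2 ^ (j - n)
    set r := (l - 1) % 2 ^ (j - n)
    have hr : r < 2 ^ (j - n) := Nat.mod_lt _ hB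
    have hq : q < 2 ^ n := by
      rw [Nat.div_lt_iff_lt_mul hB, ← pow_add, Nat.add_sub_cancel' (h.lt_of_ne hnj).le]
      omega
    have hl' : (l : ℤ) - 1 = 2 ^ (j - n) * q + r := by
      rw [← Nat.cast_one, ← Nat.cast_sub hl₁, ← hqr]; push_cast; ring
    obtain ⟨c, hc, hk⟩ := h.exists_offset hnj hl' (by positivity) (by exact_mod_cast hr)
    have hq' : ((m : ℤ) - 1 - c) % 2 ^ n = q := by
      rw [(hk.sub_right c).eq, add_sub_cancel_right]
      exact Int.emod_eq_of_lt (by positivity) (by exact_mod_cast hq)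
    refine Finset.mem_biUnion.2 ⟨r, Finset.mem_range.2 hr, Finset.mem_image.2 ⟨c, hc, ?_⟩⟩
    rw [hq', Int.toNat_natCast]
    omega
  calc _ ≤ ((Finset.range (2 ^ (j - n))).biUnion candidates).card := Finset.card_le_card hsub
    _ ≤ (Finset.range (2 ^ (j - n))).card * 3 := Finset.card_biUnion_le_card_mul _ _ _
        fun r _ => Finset.card_image_le.trans Finset.card_le_three
    _ = 3 * 2 ^ (j - n) := by rw [Finset.card_range, mul_comm]

open scoped Classical in
theorem card_filter_inducesArc_self_le (n m : ℕ) :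
    ((Finset.Icc 1 (2 ^ n)).filter (inducesArc n · n m)).card ≤ 3 := by
  calc _ ≤ ({m - 1, m, m + 1} : Finset ℕ).card := by
        refine Finset.card_le_card fun l hl => ?_
        simp only [Finset.mem_filter, inducesArc] at hl
        simp only [Finset.mem_insert, Finset.mem_singleton]
        omega
    _ ≤ 3 := Finset.card_le_three

theorem stmt_15_general (n m j : ℕ) :
    Set.ncard {l | l ∈ Finset.Icc 1 (2 ^ j) ∧ inducesArc j l n m} ≤ 3 * 2 ^ (j - n) := by
  classical
  rw [← Finset.coe_filter, Set.ncard_coe_finset]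
  rcases eq_or_ne n j with rfl | hnj
  · simpa using card_filter_inducesArc_self_le n m
  · exact card_filter_inducesArc_le_of_ne hnj

/-- For any `n`-level dyadic arc `Γ_{n,m}` and any `j ≥ n`, the number of `j`-level dyadic
arcs `Γ_{j,l}` whose annular decomposition `𝒫(Γ_{j,l})` contains `Γ_{n,m}` is at most
`3 · 2^{j-n}`. -/
theorem stmt_15 (n m j : ℕ) (hn : 1 ≤ n) (hm : m ∈ Finset.Icc 1 (2 ^ n)) (hj : n ≤ j) :
    Set.ncard {l | l ∈ Finset.Icc 1 (2 ^ j) ∧ inducesArc j l n m} ≤ 3 * 2 ^ (j - n) :=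
  stmt_15_general n m j
end
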